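/- arXiv:2405.09841 — 2 statements merged into one kernel-verified Lean document; each statement's English description precedes it below -/
import Mathlib

section
/- The proximal mapping of the nuclear norm over the positive semidefinite cone is eigenvalue soft thresholding: if Z ∈ S^{p×p} is symmetric with eigendecomposition Z = U diag(σ₁,…,σ_p) Uᵀ, then the unique minimizer over X ⪰ 0 of ‖X‖_* + (1/(2λ))‖X − Z‖_F² equals U diag((σ₁−λ)₊,…,(σ_p−λ)₊) Uᵀ. -/
open Matrix in
lemma psd_diag_nonneg {p : ℕ} {M : Matrix (Fin p) (Fin p) ℝ} (hM : M.PosSemidef)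
    (i : Fin p) : 0 ≤ M i i := by
  exact hM.diag_nonneg

/-- The proximal mapping of the nuclear norm over the PSD cone is eigenvalue
soft thresholding.  For a PSD matrix `X` the nuclear norm (sum of singular values) equals
its trace, and the minimization is over positive semidefinite `X` only. -/
theorem stmt_1 (p : ℕ) (lam : ℝ) (hlam : 0 < lam)
    (Z U : Matrix (Fin p) (Fin p) ℝ) (σ : Fin p → ℝ)
    (hZsym : Z.IsSymm)
    (hU : U * U.transpose = 1) (hU' : U.transpose * U = 1)
    (hZdec : Z = U * Matrix.diagonal σ * U.transpose) :
    let nuclear : Matrix (Fin p) (Fin p) ℝ → ℝ := fun X => X.trace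
    let f : Matrix (Fin p) (Fin p) ℝ → ℝ := fun X =>
      nuclear X + (1 / (2 * lam)) * ∑ i, ∑ j, (X i j - Z i j) ^ 2
    let X0 : Matrix (Fin p) (Fin p) ℝ :=
      U * Matrix.diagonal (fun i => max (σ i - lam) 0) * U.transpose
    X0.PosSemidef ∧ (∀ X, X.PosSemidef → f X0 ≤ f X) ∧
      (∀ X, X.PosSemidef → f X = f X0 → X = X0) := by
  intro nuclear f X0
  have hlam' : lam ≠ 0 := ne_of_gt hlam
  set D : Matrix (Fin p) (Fin p) ℝ := Matrix.diagonal (fun i => max (σ i - lam) 0) with hD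
  set E : Matrix (Fin p) (Fin p) ℝ := Matrix.diagonal (fun i => max (lam - σ i) 0) with hE
  set N : Matrix (Fin p) (Fin p) ℝ := U * E * U.transpose with hN
  have hUconj : U.conjTranspose = U.transpose := Matrix.conjTranspose_eq_transpose_of_trivial U
  have hUTconj : U.transpose.conjTranspose = U := by
    rw [Matrix.conjTranspose_eq_transpose_of_trivial, Matrix.transpose_transpose]
  -- X0 is PSD
  have hX0psd : X0.PosSemidef := by
    have hDpsd : D.PosSemidef := Matrix.PosSemidef.diagonal (fun i => le_max_right _ _)
    have := hDpsd.mul_mul_conjTranspose_same U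
    rwa [hUconj] at this
  -- N is PSD
  have hNpsd : N.PosSemidef := by
    have hEpsd : E.PosSemidef := Matrix.PosSemidef.diagonal (fun i => le_max_right _ _)
    have := hEpsd.mul_mul_conjTranspose_same U
    rwa [hUconj] at this
  have hNsymm : ∀ i j, N j i = N i j := by
    intro i j
    have h := hNpsd.1
    have : N.transpose = N := by
      have := congrArg Matrix.transpose h
      have h' : N.IsSymm := by simpa [Matrix.conjTranspose_eq_transpose_of_trivial] using h
      exact h'
    exact congrFun (congrFun this i) j
  -- X0 * N = 0
  have hX0N : X0 * N = 0 := by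
    have hDE : D * E = 0 := by
      rw [hD, hE, Matrix.diagonal_mul_diagonal]
      have hz : (fun i => max (σ i - lam) 0 * max (lam - σ i) 0) = fun _ : Fin p => (0:ℝ) := by
        funext i
        rcases le_total (σ i) lam with h | h
        · simp [max_eq_right (by linarith : σ i - lam ≤ 0)]
        · simp [max_eq_right (by linarith : lam - σ i ≤ 0)]
      rw [hz, Matrix.diagonal_zero]
    show (U * D * U.transpose) * (U * E * U.transpose) = 0
    calc (U * D * U.transpose) * (U * E * U.transpose)
        = U * D * (U.transpose * U) * E * U.transpose := by noncomm_ring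
      _ = U * (D * E) * U.transpose := by rw [hU']; noncomm_ring
      _ = 0 := by rw [hDE]; simp
  -- N = X0 - Z + lam • 1
  have hNeq : N = X0 - Z + lam • (1 : Matrix (Fin p) (Fin p) ℝ) := by
    have h1 : (1 : Matrix (Fin p) (Fin p) ℝ) = U * U.transpose := hU.symm
    show U * E * U.transpose = U * D * U.transpose - Z + lam • (1 : Matrix (Fin p) (Fin p) ℝ)
    rw [hZdec, h1, hE, hD]
    have : (Matrix.diagonal fun i => max (lam - σ i) 0)
        = (Matrix.diagonal fun i => max (σ i - lam) 0) - Matrix.diagonal σ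
          + lam • (1 : Matrix (Fin p) (Fin p) ℝ) := by
      ext i j
      by_cases hij : i = j
      · subst hij
        simp only [Matrix.diagonal_apply_eq, Matrix.add_apply, Matrix.sub_apply,
          Matrix.smul_apply, Matrix.one_apply_eq, smul_eq_mul, mul_one]
        rcases le_total (σ i) lam with h | h
        · rw [max_eq_left (by linarith), max_eq_right (by linarith)]; ring
        · rw [max_eq_right (by linarith), max_eq_left (by linarith)]; ring
      · simp [Matrix.diagonal_apply_ne _ hij, Matrix.one_apply_ne hij]
    rw [this]
    noncomm_ring
  -- entrywise formula for N
  have hNentry : ∀ i j, N i j = X0 i j - Z i j + lam * (if i = j then 1 else 0) := by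
    intro i j
    rw [hNeq]
    simp [Matrix.add_apply, Matrix.sub_apply, Matrix.smul_apply, Matrix.one_apply]
  -- trace as double sum
  have hs : ∀ A : Matrix (Fin p) (Fin p) ℝ, (A * N).trace = ∑ i, ∑ j, A i j * N i j := by
    intro A
    calc (A * N).trace = ∑ i, ∑ j, A i j * N j i := by
          simp [Matrix.trace, Matrix.diag, Matrix.mul_apply]
      _ = ∑ i, ∑ j, A i j * N i j := by
          refine Finset.sum_congr rfl fun i _ => Finset.sum_congr rfl fun j _ => ?_
          rw [hNsymm]
  -- key identity
  have key : ∀ X : Matrix (Fin p) (Fin p) ℝ,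
      f X - f X0 = (1 / (2 * lam)) *
        ((∑ i, ∑ j, (X i j - X0 i j) ^ 2) + 2 * ((X * N).trace - (X0 * N).trace)) := by
    intro X
    rw [hs, hs]
    show (X.trace + (1 / (2 * lam)) * ∑ i, ∑ j, (X i j - Z i j) ^ 2)
        - (X0.trace + (1 / (2 * lam)) * ∑ i, ∑ j, (X0 i j - Z i j) ^ 2) = _
    have htr : ∀ A : Matrix (Fin p) (Fin p) ℝ, A.trace = ∑ i, A i i := fun A => rfl
    rw [htr, htr]
    have hNij : ∀ i j, X i j * N i j - X0 i j * N i j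
        = (X i j - X0 i j) * (X0 i j - Z i j) + lam * ((X i j - X0 i j) * (if i = j then 1 else 0)) := by
      intro i j; rw [hNentry]; ring
    have collapse : ∀ A : Matrix (Fin p) (Fin p) ℝ,
        ∑ i, ∑ j, A i j * (if i = j then (1:ℝ) else 0) = ∑ i, A i i := by
      intro A
      refine Finset.sum_congr rfl fun i _ => ?_
      have h1 : ∀ j, A i j * (if i = j then (1:ℝ) else 0) = if i = j then A i j else 0 := by
        intro j; split <;> simp
      rw [Finset.sum_congr rfl fun j _ => h1 j]
      simp
    have e1 : ∑ i, ∑ j, (X i j - Z i j) ^ 2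
        = (∑ i, ∑ j, (X0 i j - Z i j) ^ 2) + (∑ i, ∑ j, (X i j - X0 i j) ^ 2)
          + 2 * ∑ i, ∑ j, (X i j - X0 i j) * (X0 i j - Z i j) := by
      rw [Finset.mul_sum, ← Finset.sum_add_distrib, ← Finset.sum_add_distrib]
      refine Finset.sum_congr rfl fun i _ => ?_
      rw [Finset.mul_sum, ← Finset.sum_add_distrib, ← Finset.sum_add_distrib]
      refine Finset.sum_congr rfl fun j _ => ?_
      ring
    have e2 : (∑ i, ∑ j, X i j * N i j) - (∑ i, ∑ j, X0 i j * N i j)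
        = (∑ i, ∑ j, (X i j - X0 i j) * (X0 i j - Z i j))
          + lam * ((∑ i, X i i) - (∑ i, X0 i i)) := by
      rw [← Finset.sum_sub_distrib]
      have : ∀ i ∈ Finset.univ, (∑ j, X i j * N i j) - (∑ j, X0 i j * N i j)
          = (∑ j, (X i j - X0 i j) * (X0 i j - Z i j))
            + lam * ∑ j, (X i j - X0 i j) * (if i = j then (1:ℝ) else 0) := by
        intro i _
        rw [← Finset.sum_sub_distrib, Finset.mul_sum, ← Finset.sum_add_distrib]
        refine Finset.sum_congr rfl fun j _ => ?_
        rw [hNij]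
      rw [Finset.sum_congr rfl this, Finset.sum_add_distrib, ← Finset.mul_sum,
        collapse (fun i j => X i j - X0 i j)]
      rw [Finset.sum_sub_distrib]
    rw [e1, e2]
    field_simp
    ring
  -- trace (X * N) ≥ 0 for PSD X
  have htrXN : ∀ X : Matrix (Fin p) (Fin p) ℝ, X.PosSemidef → 0 ≤ (X * N).trace := by
    intro X hX
    have hB : (U.transpose * X * U).PosSemidef := by
      have := hX.conjTranspose_mul_mul_same U
      rwa [hUconj] at this
    have : (X * N).trace = ((U.transpose * X * U) * E).trace := by
      rw [hN]
      rw [show X * (U * E * U.transpose) = (X * U * E) * U.transpose by noncomm_ring,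
        Matrix.trace_mul_comm]
      congr 1
      noncomm_ring
    rw [this]
    have : ((U.transpose * X * U) * E).trace
        = ∑ i, (U.transpose * X * U) i i * max (lam - σ i) 0 := by
      simp [Matrix.trace, Matrix.diag, hE, Matrix.mul_diagonal]
    rw [this]
    exact Finset.sum_nonneg fun i _ =>
      mul_nonneg (psd_diag_nonneg hB i) (le_max_right _ _)
  have htrX0N : (X0 * N).trace = 0 := by rw [hX0N]; simp
  refine ⟨hX0psd, ?_, ?_⟩
  · intro X hX
    have h1 := key X
    have h2 : 0 ≤ ∑ i, ∑ j, (X i j - X0 i j) ^ 2 :=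
      Finset.sum_nonneg fun i _ => Finset.sum_nonneg fun j _ => sq_nonneg _
    have h3 := htrXN X hX
    rw [htrX0N] at h1
    have hc : (0:ℝ) < 1 / (2 * lam) := by positivity
    have h4 : 0 ≤ f X - f X0 := by
      rw [h1]; exact mul_nonneg hc.le (by linarith)
    linarith
  · intro X hX hfeq
    have h1 := key X
    rw [hfeq, sub_self, htrX0N] at h1
    have h2 : 0 ≤ ∑ i, ∑ j, (X i j - X0 i j) ^ 2 :=
      Finset.sum_nonneg fun i _ => Finset.sum_nonneg fun j _ => sq_nonneg _
    have h3 := htrXN X hX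
    have hsum : ∑ i, ∑ j, (X i j - X0 i j) ^ 2 = 0 := by
      have hc : (0:ℝ) < 1 / (2 * lam) := by positivity
      nlinarith
    ext i j
    have hi := (Finset.sum_eq_zero_iff_of_nonneg
      (fun i _ => Finset.sum_nonneg fun j _ => sq_nonneg ((X i j - X0 i j)))).mp hsum i
      (Finset.mem_univ i)
    have hj := (Finset.sum_eq_zero_iff_of_nonneg
      (fun j _ => sq_nonneg (X i j - X0 i j))).mp hi j (Finset.mem_univ j)
    have := pow_eq_zero_iff (n := 2) (by norm_num) |>.mp hj
    linarith [this]
end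

section
/- If a linear map G : V → V on a finite-dimensional inner product space V = Ω × T (with Ω, T subspaces of S^{p×p} satisfying Ω ∩ T = {0}) is defined by G(S, L) = (P_Ω(I(S+L)), P_T(I(S+L))) where I : S^{p×p} → S^{p×p} is a positive definite self-adjoint linear operator, then G is invertible. -/
/-!
If `G (S, L) = 0`, then `I (S + L)` is orthogonal to both `S ∈ Ω` and `L ∈ T`, hence
`⟪S + L, I (S + L)⟫ = 0`, and positive definiteness of `I` forces `S + L = 0`. Since
`Ω ⊓ T = ⊥`, the sum map `Ω × T → S^{p×p}` is injective, so `S = L = 0`. An injective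
endomorphism of the finite-dimensional space `Ω × T` is bijective.
-/

/-- trace inner product. -/
def inn {n m : Type*} [Fintype n] [Fintype m] (A B : Matrix n m ℝ) : ℝ :=
  ∑ i, ∑ j, A i j * B i j

open LinearMap

section TraceInner

variable {n m : Type*} [Fintype n] [Fintype m]

lemma inn_comm (A B : Matrix n m ℝ) : inn A B = inn B A := by
  simp only [inn, mul_comm]

lemma inn_add_right (A B C : Matrix n m ℝ) : inn A (B + C) = inn A B + inn A C := by
  simp only [inn, Matrix.add_apply, mul_add, Finset.sum_add_distrib]

lemma inn_sub_left (A B C : Matrix n m ℝ) : inn (A - B) C = inn A C - inn B C := by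
  simp only [inn, Matrix.sub_apply, sub_mul, Finset.sum_sub_distrib]

lemma inn_zero_left (B : Matrix n m ℝ) : inn 0 B = 0 := by
  simp only [inn, Matrix.zero_apply, zero_mul, Finset.sum_const_zero]

lemma inn_eq_inn_of_orthogonalProjection {K : Submodule ℝ (Matrix n m ℝ)}
    {P : Matrix n m ℝ →ₗ[ℝ] Matrix n m ℝ} (hP : ∀ A, ∀ B ∈ K, inn (A - P A) B = 0)
    (A : Matrix n m ℝ) {B : Matrix n m ℝ} (hB : B ∈ K) : inn A B = inn (P A) B := by
  rw [← sub_eq_zero, ← inn_sub_left]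
  exact hP A B hB

lemma add_eq_zero_of_orthogonalProjection_eq_zero {Ω T : Submodule ℝ (Matrix n m ℝ)}
    {PΩ PT I : Matrix n m ℝ →ₗ[ℝ] Matrix n m ℝ}
    (hPΩorth : ∀ A, ∀ B ∈ Ω, inn (A - PΩ A) B = 0)
    (hPTorth : ∀ A, ∀ B ∈ T, inn (A - PT A) B = 0)
    (hIpd : ∀ M : Matrix n m ℝ, M ≠ 0 → 0 < inn M (I M))
    {S L : Matrix n m ℝ} (hS : S ∈ Ω) (hL : L ∈ T)
    (hΩ : PΩ (I (S + L)) = 0) (hT : PT (I (S + L)) = 0) : S + L = 0 := by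
  by_contra hne
  have hIS : inn (I (S + L)) S = 0 := by
    rw [inn_eq_inn_of_orthogonalProjection hPΩorth _ hS, hΩ, inn_zero_left]
  have hIL : inn (I (S + L)) L = 0 := by
    rw [inn_eq_inn_of_orthogonalProjection hPTorth _ hL, hT, inn_zero_left]
  have hpos := hIpd _ hne
  rw [inn_comm, inn_add_right, hIS, hIL, add_zero] at hpos
  exact hpos.false

end TraceInner

lemma Submodule.injective_coprod_subtype {R M : Type*} [Ring R] [AddCommGroup M] [Module R M]
    {p q : Submodule R M} (h : Disjoint p q) : Function.Injective (p.subtype.coprod q.subtype) := by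
  rw [← ker_eq_bot, ker_coprod_of_disjoint_range, ker_subtype, ker_subtype, prod_bot]
  rwa [range_subtype, range_subtype]

theorem stmt_19_general (p : ℕ) (Ω T : Submodule ℝ (Matrix (Fin p) (Fin p) ℝ))
    (htriv : Ω ⊓ T = ⊥)
    (PΩ PT I : Matrix (Fin p) (Fin p) ℝ →ₗ[ℝ] Matrix (Fin p) (Fin p) ℝ)
    (hPΩmem : ∀ A, PΩ A ∈ Ω)
    (hPΩorth : ∀ A, ∀ B ∈ Ω, inn (A - PΩ A) B = 0)
    (hPTmem : ∀ A, PT A ∈ T)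
    (hPTorth : ∀ A, ∀ B ∈ T, inn (A - PT A) B = 0)
    (hIpd : ∀ M : Matrix (Fin p) (Fin p) ℝ, M ≠ 0 → 0 < inn M (I M)) :
    Function.Bijective (fun SL : Ω × T =>
      ((⟨PΩ (I ((SL.1 : Matrix (Fin p) (Fin p) ℝ) + (SL.2 : Matrix (Fin p) (Fin p) ℝ))),
          hPΩmem _⟩ : Ω),
       (⟨PT (I ((SL.1 : Matrix (Fin p) (Fin p) ℝ) + (SL.2 : Matrix (Fin p) (Fin p) ℝ))),
          hPTmem _⟩ : T))) := by
  let G : Ω × T →ₗ[ℝ] Ω × T :=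
    (PΩ.codRestrict Ω hPΩmem).prod (PT.codRestrict T hPTmem) ∘ₗ I ∘ₗ Ω.subtype.coprod T.subtype
  have hG : Function.Injective G := by
    rw [← ker_eq_bot, ker_eq_bot']
    rintro ⟨⟨S, hS⟩, ⟨L, hL⟩⟩ h
    have hSL : S + L = 0 := add_eq_zero_of_orthogonalProjection_eq_zero hPΩorth hPTorth hIpd
      hS hL (congrArg Subtype.val (congrArg Prod.fst h)) (congrArg Subtype.val (congrArg Prod.snd h))
    exact Submodule.injective_coprod_subtype (disjoint_iff.mpr htriv) (hSL.trans (map_zero _).symm)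
  exact ⟨hG, injective_iff_surjective.mp hG⟩

/-- invertibility of the operator `G(S, L) = (P_Ω(I(S+L)), P_T(I(S+L)))` on
`Ω × T`, where `Ω, T` are subspaces of symmetric matrices with `Ω ∩ T = {0}`, `P_Ω, P_T`
are the orthogonal projections (w.r.t. the trace inner product), and `I` is a positive
definite self-adjoint linear operator on matrices. -/
theorem stmt_19 (p : ℕ) (Ω T : Submodule ℝ (Matrix (Fin p) (Fin p) ℝ))
    (hsymΩ : ∀ A ∈ Ω, A.IsSymm) (hsymT : ∀ A ∈ T, A.IsSymm)
    (htriv : Ω ⊓ T = ⊥)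
    (PΩ PT I : Matrix (Fin p) (Fin p) ℝ →ₗ[ℝ] Matrix (Fin p) (Fin p) ℝ)
    (hPΩmem : ∀ A, PΩ A ∈ Ω) (hPΩid : ∀ A ∈ Ω, PΩ A = A)
    (hPΩorth : ∀ A, ∀ B ∈ Ω, inn (A - PΩ A) B = 0)
    (hPTmem : ∀ A, PT A ∈ T) (hPTid : ∀ A ∈ T, PT A = A)
    (hPTorth : ∀ A, ∀ B ∈ T, inn (A - PT A) B = 0)
    (hIsa : ∀ A B, inn (I A) B = inn A (I B))
    (hIpd : ∀ M : Matrix (Fin p) (Fin p) ℝ, M ≠ 0 → 0 < inn M (I M)) :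
    Function.Bijective (fun SL : Ω × T =>
      ((⟨PΩ (I ((SL.1 : Matrix (Fin p) (Fin p) ℝ) + (SL.2 : Matrix (Fin p) (Fin p) ℝ))),
          hPΩmem _⟩ : Ω),
       (⟨PT (I ((SL.1 : Matrix (Fin p) (Fin p) ℝ) + (SL.2 : Matrix (Fin p) (Fin p) ℝ))),
          hPTmem _⟩ : T))) :=
  stmt_19_general p Ω T htriv PΩ PT I hPΩmem hPΩorth hPTmem hPTorth hIpd
end
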